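/- Let λ ≤ μ be compositions of n and let γ be a composition with λ < γ < μ. If λ/μ is an alternate odd composition, then λ/γ is also an alternate odd composition. (Similarly, if λ/μ is alternate even then λ/γ is alternate even.) -/

import Mathlib

/-- `μ` is a composition of `n`: a list of positive integers summing to `n`. -/
def IsComposition (n : ℕ) (μ : List ℕ) : Prop := (∀ x ∈ μ, 0 < x) ∧ μ.sum = n

/-- Merge the list `l` into consecutive blocks whose sizes are given by `ν`,
replacing each block by its sum. -/
def mergeBlocks : List ℕ → List ℕ → List ℕ
  | [], _ => []
  | k :: ks, l => (l.take k).sum :: mergeBlocks ks (l.drop k)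

/-- `ν` witnesses that `lam` is obtained from `mu` by merging consecutive blocks
of sizes `ν₁, ν₂, …` (this is the composition `lam/mu`). -/
def QuotOf (lam mu ν : List ℕ) : Prop :=
  (∀ x ∈ ν, 0 < x) ∧ ν.sum = mu.length ∧ lam = mergeBlocks ν mu

/-- `lam ≤ mu` in the refinement order on compositions. -/
def Refines (lam mu : List ℕ) : Prop := ∃ ν, QuotOf lam mu ν

/-- `lam < mu` in the refinement order on compositions. -/
def StrictRefines (lam mu : List ℕ) : Prop := Refines lam mu ∧ lam ≠ mu

/-- A composition is alternate odd if the entries at even distance from the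
end (the last, third-to-last, …) all equal `1`. -/
def AlternateOdd (μ : List ℕ) : Prop :=
  ∀ i < μ.length, (μ.length - 1 - i) % 2 = 0 → μ.getD i 0 = 1

/-- A composition is alternate even if the entries at odd distance from the
end (the second-to-last, fourth-to-last, …) all equal `1`. -/
def AlternateEven (μ : List ℕ) : Prop :=
  ∀ i < μ.length, (μ.length - 1 - i) % 2 = 1 → μ.getD i 0 = 1

/-!
Write `q₁ = λ/μ`, `q₂ = λ/γ` and `q₃ = γ/μ`. Merging blocks is associative, and merging blocks of
the positive parts of `μ` is injective in the block sizes, so `q₁ = q₂/q₃`. Hence `(q₁)ᵢ` is the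
sum of a block of `(q₂)ᵢ` positive parts of `γ`, so `(q₂)ᵢ ≤ (q₁)ᵢ`. As `q₁` and `q₂` have the same
length, a part of `q₁` equal to `1` forces the part of `q₂` at the same position to be `1`.
-/

namespace List

theorem le_sum_take_of_pos {l : List ℕ} (hl : ∀ x ∈ l, 0 < x) {k : ℕ} (hk : k ≤ l.length) :
    k ≤ (l.take k).sum := by
  simpa [length_take, Nat.min_eq_left hk] using
    length_le_sum_of_one_le (l.take k) fun x hx => hl x (mem_of_mem_take hx)

theorem sum_take_lt_sum_take_of_pos {l : List ℕ} (hl : ∀ x ∈ l, 0 < x) {a b : ℕ} (hab : a < b)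
    (hb : b ≤ l.length) : (l.take a).sum < (l.take b).sum := by
  have hsplit : l.take b = l.take a ++ (l.drop a).take (b - a) := by
    rw [← take_add, Nat.add_sub_cancel' hab.le]
  have hrest : b - a ≤ ((l.drop a).take (b - a)).sum :=
    le_sum_take_of_pos (fun x hx => hl x (mem_of_mem_drop hx)) (by rw [length_drop]; omega)
  rw [hsplit, sum_append]
  omega

theorem eq_of_sum_take_eq_of_pos {l : List ℕ} (hl : ∀ x ∈ l, 0 < x) {a b : ℕ}
    (ha : a ≤ l.length) (hb : b ≤ l.length) (h : (l.take a).sum = (l.take b).sum) : a = b := by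
  rcases Nat.lt_trichotomy a b with hab | hab | hab
  · exact absurd h (sum_take_lt_sum_take_of_pos hl hab hb).ne
  · exact hab
  · exact absurd h (sum_take_lt_sum_take_of_pos hl hab ha).ne'

end List

open List

section mergeBlocks

@[simp]
theorem length_mergeBlocks (ν l : List ℕ) : (mergeBlocks ν l).length = ν.length := by
  induction ν generalizing l with
  | nil => rfl
  | cons k ks ih => simp [mergeBlocks, ih]

theorem take_mergeBlocks (ν l : List ℕ) (k : ℕ) :
    (mergeBlocks ν l).take k = mergeBlocks (ν.take k) l := by
  induction ν generalizing l k with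
  | nil => simp [mergeBlocks]
  | cons x xs ih => cases k <;> simp [mergeBlocks, ih]

theorem drop_mergeBlocks (ν l : List ℕ) (k : ℕ) :
    (mergeBlocks ν l).drop k = mergeBlocks (ν.drop k) (l.drop (ν.take k).sum) := by
  induction ν generalizing l k with
  | nil => simp [mergeBlocks]
  | cons x xs ih => cases k <;> simp [mergeBlocks, ih, drop_drop]

theorem sum_mergeBlocks (ν l : List ℕ) : (mergeBlocks ν l).sum = (l.take ν.sum).sum := by
  induction ν generalizing l with
  | nil => simp [mergeBlocks]
  | cons x xs ih => simp [mergeBlocks, ih, take_add]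

theorem mergeBlocks_mergeBlocks (ν ν' l : List ℕ) :
    mergeBlocks ν (mergeBlocks ν' l) = mergeBlocks (mergeBlocks ν ν') l := by
  induction ν generalizing ν' l with
  | nil => rfl
  | cons k ks ih =>
    simp only [mergeBlocks, take_mergeBlocks, drop_mergeBlocks, sum_mergeBlocks, ih]

variable {ν l : List ℕ}

theorem getD_le_getD_mergeBlocks (hl : ∀ x ∈ l, 0 < x) (hν : ν.sum ≤ l.length) (i : ℕ) :
    ν.getD i 0 ≤ (mergeBlocks ν l).getD i 0 := by
  induction ν generalizing l i with
  | nil => simp [mergeBlocks]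
  | cons k ks ih =>
    rw [sum_cons] at hν
    cases i with
    | zero => simp only [mergeBlocks, getD_cons_zero]; exact le_sum_take_of_pos hl (by omega)
    | succ i =>
      simp only [mergeBlocks, getD_cons_succ]
      exact ih (fun x hx => hl x (mem_of_mem_drop hx)) (by rw [length_drop]; omega) i

theorem pos_of_mem_mergeBlocks (hν : ∀ x ∈ ν, 0 < x) (hl : ∀ x ∈ l, 0 < x)
    (hsum : ν.sum ≤ l.length) : ∀ x ∈ mergeBlocks ν l, 0 < x := by
  induction ν generalizing l with
  | nil => simp [mergeBlocks]
  | cons k ks ih =>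
    rw [sum_cons] at hsum
    simp only [mergeBlocks, mem_cons, forall_eq_or_imp]
    exact ⟨(hν k mem_cons_self).trans_le (le_sum_take_of_pos hl (by omega)),
      ih (fun x hx => hν x (mem_cons_of_mem k hx)) (fun x hx => hl x (mem_of_mem_drop hx))
        (by rw [length_drop]; omega)⟩

theorem mergeBlocks_inj_of_pos {ν' : List ℕ} (hl : ∀ x ∈ l, 0 < x) (hν : ∀ x ∈ ν, 0 < x)
    (hν' : ∀ x ∈ ν', 0 < x) (hsum : ν.sum = l.length) (hsum' : ν'.sum = l.length)
    (h : mergeBlocks ν l = mergeBlocks ν' l) : ν = ν' := by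
  induction ν generalizing l ν' with
  | nil =>
    cases ν' with
    | nil => rfl
    | cons k' _ =>
      have := hν' k' mem_cons_self
      rw [sum_nil] at hsum
      rw [sum_cons] at hsum'
      omega
  | cons k ks ih =>
    cases ν' with
    | nil =>
      have := hν k mem_cons_self
      rw [sum_cons] at hsum
      rw [sum_nil] at hsum'
      omega
    | cons k' ks' =>
      simp only [mergeBlocks, cons.injEq] at h
      rw [sum_cons] at hsum hsum'
      obtain rfl : k = k' := eq_of_sum_take_eq_of_pos hl (by omega) (by omega) h.1
      rw [ih (fun x hx => hl x (mem_of_mem_drop hx)) (fun x hx => hν x (mem_cons_of_mem k hx))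
        (fun x hx => hν' x (mem_cons_of_mem k hx)) (by rw [length_drop]; omega)
        (by rw [length_drop]; omega) h.2]

theorem getD_eq_one_of_getD_mergeBlocks_eq_one (hν : ∀ x ∈ ν, 0 < x) (hl : ∀ x ∈ l, 0 < x)
    (hsum : ν.sum ≤ l.length) {i : ℕ} (hi : i < ν.length)
    (h : (mergeBlocks ν l).getD i 0 = 1) : ν.getD i 0 = 1 := by
  have hle := getD_le_getD_mergeBlocks hl hsum i
  have hpos : 0 < ν.getD i 0 := by
    rw [getD_eq_getElem _ _ hi]
    exact hν _ (getElem_mem hi)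
  omega

theorem AlternateOdd.of_mergeBlocks (hν : ∀ x ∈ ν, 0 < x) (hl : ∀ x ∈ l, 0 < x)
    (hsum : ν.sum ≤ l.length) (h : AlternateOdd (mergeBlocks ν l)) : AlternateOdd ν :=
  fun i hi hpar => getD_eq_one_of_getD_mergeBlocks_eq_one hν hl hsum hi
    (h i (by simpa using hi) (by simpa using hpar))

theorem AlternateEven.of_mergeBlocks (hν : ∀ x ∈ ν, 0 < x) (hl : ∀ x ∈ l, 0 < x)
    (hsum : ν.sum ≤ l.length) (h : AlternateEven (mergeBlocks ν l)) : AlternateEven ν :=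
  fun i hi hpar => getD_eq_one_of_getD_mergeBlocks_eq_one hν hl hsum hi
    (h i (by simpa using hi) (by simpa using hpar))

end mergeBlocks

namespace QuotOf

variable {lam gam mu ν ν' : List ℕ}

/-- `λ/μ = (λ/γ)/(γ/μ)`. -/
theorem trans (h : QuotOf lam gam ν) (h' : QuotOf gam mu ν') :
    QuotOf lam mu (mergeBlocks ν ν') := by
  obtain ⟨hν, hsum, rfl⟩ := h
  obtain ⟨hν', hsum', rfl⟩ := h'
  rw [length_mergeBlocks] at hsum
  refine ⟨pos_of_mem_mergeBlocks hν hν' hsum.le, ?_, mergeBlocks_mergeBlocks ν ν' mu⟩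
  rw [sum_mergeBlocks, hsum, take_length, hsum']

theorem unique (hmu : ∀ x ∈ mu, 0 < x) (h : QuotOf lam mu ν) (h' : QuotOf lam mu ν') :
    ν = ν' :=
  mergeBlocks_inj_of_pos hmu h.1 h'.1 h.2.1 h'.2.1 (h.2.2.symm.trans h'.2.2)

end QuotOf

theorem stmt3_general (n : ℕ) (lam gam mu : List ℕ)
    (hmu : IsComposition n mu)
    (h2 : StrictRefines gam mu)
    (q1 q2 : List ℕ) (hq1 : QuotOf lam mu q1) (hq2 : QuotOf lam gam q2) :
    (AlternateOdd q1 → AlternateOdd q2) ∧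
    (AlternateEven q1 → AlternateEven q2) := by
  obtain ⟨q3, hq3⟩ := h2.1
  obtain rfl : q1 = mergeBlocks q2 q3 := hq1.unique hmu.1 (hq2.trans hq3)
  have hsum : q2.sum ≤ q3.length := by rw [hq2.2.1, hq3.2.2, length_mergeBlocks]
  exact ⟨AlternateOdd.of_mergeBlocks hq2.1 hq3.1 hsum,
    AlternateEven.of_mergeBlocks hq2.1 hq3.1 hsum⟩

/-- If `λ ≤ μ` and `λ < γ < μ`, and `λ/μ` is alternate odd (resp. even), then
`λ/γ` is alternate odd (resp. even). -/
theorem stmt3 (n : ℕ) (lam gam mu : List ℕ)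
    (hlam : IsComposition n lam) (hgam : IsComposition n gam)
    (hmu : IsComposition n mu)
    (h1 : StrictRefines lam gam) (h2 : StrictRefines gam mu)
    (q1 q2 : List ℕ) (hq1 : QuotOf lam mu q1) (hq2 : QuotOf lam gam q2) :
    (AlternateOdd q1 → AlternateOdd q2) ∧
    (AlternateEven q1 → AlternateEven q2) :=
  stmt3_general n lam gam mu hmu h2 q1 q2 hq1 hq2
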